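/- Let M₁, M₂ be Hermitian q^n×q^n complex matrices and let U = U₁⊗⋯⊗Uₙ be a local unitary on (ℂ^q)^{⊗n}. Then B(z; U M₁ U†, U M₂ U†) = B(z; M₁, M₂) as polynomials in ℂ[z]. -/

import Mathlib

open Matrix Polynomial
open scoped BigOperators ComplexConjugate Kronecker

noncomputable section

/-- Generalized Pauli `X` (cyclic shift) on `ℂ^q`. -/
def Xmat (q : ℕ) : Matrix (Fin q) (Fin q) ℂ :=
  fun i j => if (i : ℕ) = ((j : ℕ) + 1) % q then 1 else 0

/-- Generalized Pauli `Z` (clock) on `ℂ^q`, `Z|j⟩ = ζ^j |j⟩` with `ζ = exp(2πi/q)`. -/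
def Zmat (q : ℕ) : Matrix (Fin q) (Fin q) ℂ :=
  Matrix.diagonal fun j => Complex.exp (2 * (Real.pi : ℂ) * Complex.I / (q : ℂ)) ^ (j : ℕ)

/-- Single-qudit Pauli `E(a,b) = X^a Z^b` for a label `(a,b) ∈ (ℤ/qℤ)²`. -/
def Epauli (q : ℕ) (p : ZMod q × ZMod q) : Matrix (Fin q) (Fin q) ℂ :=
  Xmat q ^ p.1.val * Zmat q ^ p.2.val

/-- Multi-qudit Pauli `E(p) = E(p₁) ⊗ ⋯ ⊗ E(pₙ)` on the space indexed by `ι → Fin q`. -/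
def EV (q : ℕ) {ι : Type} [Fintype ι] (p : ι → ZMod q × ZMod q) :
    Matrix (ι → Fin q) (ι → Fin q) ℂ :=
  fun v w => ∏ i, Epauli q (p i) (v i) (w i)

/-- Weight of a Pauli label vector: the number of non-identity factors. -/
def wtL (q : ℕ) {ι : Type} [Fintype ι] (p : ι → ZMod q × ZMod q) : ℕ :=
  (Finset.univ.filter fun i => p i ≠ 0).card

/-- Kronecker (tensor) product of a family of local `q × q` matrices. -/
def kron (q : ℕ) {ι : Type} [Fintype ι] (Us : ι → Matrix (Fin q) (Fin q) ℂ) :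
    Matrix (ι → Fin q) (ι → Fin q) ℂ :=
  fun v w => ∏ i, Us i (v i) (w i)

/-- Shor–Laflamme enumerator polynomial `B(z; M₁, M₂)`. -/
def enumB (q : ℕ) [NeZero q] {ι : Type} [Fintype ι] [DecidableEq ι]
    (M₁ M₂ : Matrix (ι → Fin q) (ι → Fin q) ℂ) : Polynomial ℂ :=
  ∑ p : ι → ZMod q × ZMod q,
    Polynomial.C (Matrix.trace ((EV q p)ᴴ * M₁ * EV q p * M₂)) *
      Polynomial.X ^ wtL q p

/-!
Evaluate at an arbitrary `z : ℂ`: the enumerator becomes `tr (T_z(M₁) M₂)` with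
`T_z(M) = ∑_p z^{wt p} E(p)† M E(p)`. The Paulis and the weight both factor over the qudits, so on
product matrices `T_z` acts factorwise by the single-qudit map
`A ↦ ∑_r z^{[r ≠ 0]} E(r)† A E(r) = (1 - z) A + z q tr(A) 1`,
the last equality being the orthogonality of the Weyl–Heisenberg matrices.
This map commutes with unitary conjugation and product matrices span everything, so `T_z`
commutes with conjugation by a local unitary, which the trace then absorbs.
-/

section UnitaryConj

variable {n R : Type*} [Fintype n] [DecidableEq n] [CommRing R] [StarRing R]
  {U : Matrix n n R}

lemma trace_unitary_conj (hU : U ∈ unitaryGroup n R) (A : Matrix n n R) :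
    trace (U * A * Uᴴ) = trace A := by
  rw [trace_mul_cycle, ← star_eq_conjTranspose, mem_unitaryGroup_iff'.mp hU, Matrix.one_mul]

lemma trace_unitary_conj_mul_unitary_conj (hU : U ∈ unitaryGroup n R) (A B : Matrix n n R) :
    trace (U * A * Uᴴ * (U * B * Uᴴ)) = trace (A * B) := by
  have hUU : Uᴴ * U = 1 := mem_unitaryGroup_iff'.mp hU
  rw [← trace_unitary_conj hU (A * B)]
  simp only [Matrix.mul_assoc]
  rw [← Matrix.mul_assoc Uᴴ U, hUU, Matrix.one_mul]

end UnitaryConj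

section SingleQudit

variable {q : ℕ}

lemma natCast_fin_inj {i j : Fin q} : ((i : ℕ) : ZMod q) = (j : ℕ) ↔ i = j := by
  rw [ZMod.natCast_eq_natCast_iff', Nat.mod_eq_of_lt i.isLt, Nat.mod_eq_of_lt j.isLt, Fin.val_inj]

lemma natCast_fin_bijective [NeZero q] : Function.Bijective (fun i : Fin q => ((i : ℕ) : ZMod q)) :=
  (Fintype.bijective_iff_injective_and_card _).mpr ⟨fun _ _ => natCast_fin_inj.mp, by simp⟩

lemma Xmat_apply (i j : Fin q) :
    Xmat q i j = if ((i : ℕ) : ZMod q) = (j : ℕ) + 1 then 1 else 0 := by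
  refine if_congr ?_ rfl rfl
  rw [← Nat.cast_succ, ZMod.natCast_eq_natCast_iff', Nat.mod_eq_of_lt i.isLt]

lemma Xmat_pow_apply [NeZero q] (k : ℕ) (i j : Fin q) :
    (Xmat q ^ k) i j = if ((i : ℕ) : ZMod q) = (j : ℕ) + k then 1 else 0 := by
  induction k generalizing i with
  | zero => simp [Matrix.one_apply, natCast_fin_inj]
  | succ k ih =>
    rw [pow_succ', Matrix.mul_apply]
    simp_rw [Xmat_apply, ih, ite_mul, one_mul, zero_mul]
    refine (natCast_fin_bijective.sum_comp (fun t => if ((i : ℕ) : ZMod q) = t + 1 then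
      (if t = ((j : ℕ) : ZMod q) + (k : ZMod q) then (1 : ℂ) else 0) else 0)).trans ?_
    rw [Fintype.sum_eq_single (((j : ℕ) : ZMod q) + k) fun t ht => by simp [ht]]
    simp [add_assoc]

lemma Zmat_pow [NeZero q] (k : ℕ) :
    Zmat q ^ k = diagonal fun j : Fin q => ZMod.stdAddChar (((j : ℕ) : ZMod q) * (k : ZMod q)) := by
  rw [Zmat, diagonal_pow]
  congr 1
  ext j
  rw [Pi.pow_apply, ← pow_mul, ← Complex.exp_nat_mul, ← Nat.cast_mul, ZMod.stdAddChar_apply,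
    ZMod.toCircle_natCast]
  congr 1
  push_cast
  ring

lemma Epauli_apply [NeZero q] (r : ZMod q × ZMod q) (i j : Fin q) :
    Epauli q r i j = if ((i : ℕ) : ZMod q) = (j : ℕ) + r.1
      then ZMod.stdAddChar (((j : ℕ) : ZMod q) * r.2) else 0 := by
  rw [Epauli, Zmat_pow, mul_diagonal, Xmat_pow_apply, ZMod.natCast_zmod_val, ZMod.natCast_zmod_val,
    ite_mul, one_mul, zero_mul]

lemma Epauli_zero [NeZero q] : Epauli q 0 = 1 := by
  simp [Epauli]

lemma sum_star_Epauli_mul_Epauli [NeZero q] (x v y w : Fin q) :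
    ∑ r, star (Epauli q r x v) * Epauli q r y w = if x = y ∧ v = w then (q : ℂ) else 0 := by
  have hterm (a b : ZMod q) : star (Epauli q (a, b) x v) * Epauli q (a, b) y w =
      (if ((x : ℕ) : ZMod q) = (v : ℕ) + a ∧ ((y : ℕ) : ZMod q) = (w : ℕ) + a then 1 else 0) *
        ZMod.stdAddChar (b * (((w : ℕ) : ZMod q) - ((v : ℕ) : ZMod q))) := by
    have hchar : star (ZMod.stdAddChar (((v : ℕ) : ZMod q) * b)) *
        ZMod.stdAddChar (((w : ℕ) : ZMod q) * b) =
          ZMod.stdAddChar (b * (((w : ℕ) : ZMod q) - ((v : ℕ) : ZMod q))) := by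
      rw [Complex.star_def, ← AddChar.map_neg_eq_conj, ← AddChar.map_add_eq_mul]
      ring_nf
    rw [Epauli_apply, Epauli_apply, ← hchar]
    split_ifs <;> simp_all
  -- orthogonality of characters in the `Z`-exponent forces `v = w`, then the `X`-shift `x = y`
  simp_rw [Fintype.sum_prod_type, hterm, ← Finset.mul_sum,
    AddChar.sum_mulShift _ (ZMod.isPrimitive_stdAddChar q), sub_eq_zero,
    natCast_fin_inj, ZMod.card]
  obtain rfl | hvw := eq_or_ne v w
  · have hshift (a : ZMod q) : ((x : ℕ) : ZMod q) = (v : ℕ) + a ↔ a = (x : ℕ) - (v : ℕ) := by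
      rw [eq_sub_iff_add_eq', eq_comm]
    simp_rw [hshift, ite_and]
    simp [ite_mul, natCast_fin_inj, eq_comm]
  · simp [hvw, hvw.symm]

lemma sum_Epauli_conjTranspose_mul_mul [NeZero q] (A : Matrix (Fin q) (Fin q) ℂ) :
    ∑ r, (Epauli q r)ᴴ * A * Epauli q r = ((q : ℂ) * trace A) • 1 := by
  ext v w
  simp only [Matrix.sum_apply, mul_apply, conjTranspose_apply, Finset.sum_mul]
  rw [Finset.sum_comm]
  simp_rw [Finset.sum_comm (s := Finset.univ (α := ZMod q × ZMod q))]
  have hkernel (x y : Fin q) : ∑ r, star (Epauli q r y v) * A y x * Epauli q r x w =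
      A y x * if y = x ∧ v = w then (q : ℂ) else 0 := by
    rw [← sum_star_Epauli_mul_Epauli, Finset.mul_sum]
    exact Finset.sum_congr rfl fun r _ => by ring
  simp_rw [hkernel]
  by_cases hvw : v = w <;> simp [hvw, trace, Finset.mul_sum, mul_comm]

end SingleQudit

section Depolarizing

variable {q : ℕ}

def depolarize (q : ℕ) (z : ℂ) (A : Matrix (Fin q) (Fin q) ℂ) : Matrix (Fin q) (Fin q) ℂ :=
  (1 - z) • A + (z * q * trace A) • 1

lemma sum_weighted_Epauli_conj [NeZero q] (z : ℂ) (A : Matrix (Fin q) (Fin q) ℂ) :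
    ∑ r, (if r ≠ 0 then z else 1) • ((Epauli q r)ᴴ * A * Epauli q r) = depolarize q z A := by
  have hweight (r : ZMod q × ZMod q) :
      (if r ≠ 0 then z else 1) = z + if r = 0 then 1 - z else 0 := by
    split_ifs <;> simp_all
  simp_rw [hweight, add_smul, Finset.sum_add_distrib, ← Finset.smul_sum,
    sum_Epauli_conjTranspose_mul_mul, ite_smul, zero_smul, Finset.sum_ite_eq', Finset.mem_univ,
    if_true, Epauli_zero, conjTranspose_one, Matrix.one_mul, Matrix.mul_one, smul_smul, depolarize]
  ring_nf
  abel

lemma depolarize_unitary_conj {U : Matrix (Fin q) (Fin q) ℂ} (hU : U ∈ unitaryGroup (Fin q) ℂ)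
    (z : ℂ) (A : Matrix (Fin q) (Fin q) ℂ) :
    depolarize q z (U * A * Uᴴ) = U * depolarize q z A * Uᴴ := by
  have hUU : U * Uᴴ = 1 := mem_unitaryGroup_iff.mp hU
  simp [depolarize, trace_unitary_conj hU, Matrix.mul_add, Matrix.add_mul, hUU]

end Depolarizing

section Kronecker

variable {q : ℕ} {ι : Type} [Fintype ι]

lemma kron_conjTranspose (A : ι → Matrix (Fin q) (Fin q) ℂ) :
    (kron q A)ᴴ = kron q fun i => (A i)ᴴ := by
  ext v w
  simp only [conjTranspose_apply, kron, star_prod]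

lemma kron_smul (c : ι → ℂ) (A : ι → Matrix (Fin q) (Fin q) ℂ) :
    kron q (fun i => c i • A i) = (∏ i, c i) • kron q A := by
  ext v w
  simp only [kron, Matrix.smul_apply, smul_eq_mul, Finset.prod_mul_distrib]

lemma kron_one : kron q (fun _ : ι => (1 : Matrix (Fin q) (Fin q) ℂ)) = 1 := by
  ext v w
  simp only [kron, one_apply, Fintype.prod_boole, funext_iff]

lemma kron_single (x y : ι → Fin q) :
    kron q (fun i => single (x i) (y i) (1 : ℂ)) = single x y 1 := by
  ext v w
  simp only [kron, single_apply, Fintype.prod_boole, funext_iff, forall_and]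

variable [DecidableEq ι]

lemma kron_mul (A B : ι → Matrix (Fin q) (Fin q) ℂ) :
    kron q A * kron q B = kron q fun i => A i * B i := by
  ext v w
  simp only [kron, mul_apply, ← Finset.prod_mul_distrib]
  exact (Fintype.prod_sum fun i α => A i (v i) α * B i α (w i)).symm

lemma sum_kron {R : Type*} [Fintype R] (f : ι → R → Matrix (Fin q) (Fin q) ℂ) :
    ∑ p : ι → R, kron q (fun i => f i (p i)) = kron q fun i => ∑ r, f i r := by
  ext v w
  simp only [Matrix.sum_apply, kron]
  exact (Fintype.prod_sum fun i r => f i r (v i) (w i)).symm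

lemma kron_mem_unitaryGroup {U : ι → Matrix (Fin q) (Fin q) ℂ}
    (hU : ∀ i, U i ∈ unitaryGroup (Fin q) ℂ) : kron q U ∈ unitaryGroup (ι → Fin q) ℂ := by
  rw [mem_unitaryGroup_iff, star_eq_conjTranspose, kron_conjTranspose, kron_mul]
  simp_rw [← star_eq_conjTranspose, fun i => mem_unitaryGroup_iff.mp (hU i), kron_one]

end Kronecker

lemma pow_wtL {q : ℕ} {ι : Type} [Fintype ι] (z : ℂ) (p : ι → ZMod q × ZMod q) :
    z ^ wtL q p = ∏ i, if p i ≠ 0 then z else 1 := by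
  rw [wtL, ← Finset.prod_const, Finset.prod_filter]

section PauliTwirl

variable {q : ℕ} [NeZero q] {ι : Type} [Fintype ι] [DecidableEq ι]

def pauliTwirl (q : ℕ) [NeZero q] (z : ℂ) (M : Matrix (ι → Fin q) (ι → Fin q) ℂ) :
    Matrix (ι → Fin q) (ι → Fin q) ℂ :=
  ∑ p : ι → ZMod q × ZMod q, z ^ wtL q p • ((EV q p)ᴴ * M * EV q p)

lemma pauliTwirl_add (z : ℂ) (M N : Matrix (ι → Fin q) (ι → Fin q) ℂ) :
    pauliTwirl q z (M + N) = pauliTwirl q z M + pauliTwirl q z N := by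
  simp only [pauliTwirl, Matrix.mul_add, Matrix.add_mul, smul_add, Finset.sum_add_distrib]

lemma pauliTwirl_smul (z c : ℂ) (M : Matrix (ι → Fin q) (ι → Fin q) ℂ) :
    pauliTwirl q z (c • M) = c • pauliTwirl q z M := by
  simp only [pauliTwirl, Matrix.mul_smul, Matrix.smul_mul, Finset.smul_sum, smul_comm c]

lemma pauliTwirl_kron (z : ℂ) (B : ι → Matrix (Fin q) (Fin q) ℂ) :
    pauliTwirl q z (kron q B) = kron q fun i => depolarize q z (B i) := by
  have hEV (p : ι → ZMod q × ZMod q) : EV q p = kron q fun i => Epauli q (p i) := rfl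
  simp_rw [pauliTwirl, hEV, kron_conjTranspose, kron_mul, pow_wtL, ← kron_smul]
  rw [sum_kron fun i r => (if r ≠ 0 then z else 1) • ((Epauli q r)ᴴ * B i * Epauli q r)]
  simp_rw [sum_weighted_Epauli_conj]

lemma pauliTwirl_kron_conj {U : ι → Matrix (Fin q) (Fin q) ℂ}
    (hU : ∀ i, U i ∈ unitaryGroup (Fin q) ℂ) (z : ℂ) (M : Matrix (ι → Fin q) (ι → Fin q) ℂ) :
    pauliTwirl q z (kron q U * M * (kron q U)ᴴ) = kron q U * pauliTwirl q z M * (kron q U)ᴴ := by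
  have hkron (B : ι → Matrix (Fin q) (Fin q) ℂ) : pauliTwirl q z (kron q U * kron q B * (kron q U)ᴴ)
      = kron q U * pauliTwirl q z (kron q B) * (kron q U)ᴴ := by
    simp only [kron_conjTranspose, kron_mul, pauliTwirl_kron, depolarize_unitary_conj (hU _)]
  -- both sides are additive in `M`, and the matrix units are product matrices
  induction M using Matrix.induction_on' with
  | h_zero => simp [pauliTwirl]
  | h_add M N hM hN => simp only [Matrix.mul_add, Matrix.add_mul, pauliTwirl_add, hM, hN]
  | h_std_basis x y c =>
    have hsingle : single x y c = c • kron q fun i => single (x i) (y i) 1 := by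
      rw [kron_single, smul_single, smul_eq_mul, mul_one]
    simp only [hsingle, Matrix.mul_smul, Matrix.smul_mul, pauliTwirl_smul, hkron]

lemma eval_enumB (z : ℂ) (M₁ M₂ : Matrix (ι → Fin q) (ι → Fin q) ℂ) :
    (enumB q M₁ M₂).eval z = trace (pauliTwirl q z M₁ * M₂) := by
  simp only [enumB, pauliTwirl, eval_finsetSum, eval_mul, eval_C, eval_pow, eval_X, Finset.sum_mul,
    trace_sum, Matrix.smul_mul, trace_smul, smul_eq_mul, mul_comm]

end PauliTwirl

theorem stmt2_general (q n : ℕ) [NeZero q]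
    (M₁ M₂ : Matrix ((Fin n) → Fin q) ((Fin n) → Fin q) ℂ)
    (Us : Fin n → Matrix (Fin q) (Fin q) ℂ)
    (hU : ∀ j, Us j ∈ Matrix.unitaryGroup (Fin q) ℂ) :
    enumB q (kron q Us * M₁ * (kron q Us)ᴴ) (kron q Us * M₂ * (kron q Us)ᴴ) =
      enumB q M₁ M₂ := by
  refine Polynomial.funext fun z => ?_
  rw [eval_enumB, eval_enumB, pauliTwirl_kron_conj hU,
    trace_unitary_conj_mul_unitary_conj (kron_mem_unitaryGroup hU)]

/-- Local unitary invariance of the Shor–Laflamme `B`-enumerator. -/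
theorem stmt2 (q n : ℕ) [NeZero q] (hq : 2 ≤ q) (hn : 1 ≤ n)
    (M₁ M₂ : Matrix ((Fin n) → Fin q) ((Fin n) → Fin q) ℂ)
    (hM₁ : M₁.IsHermitian) (hM₂ : M₂.IsHermitian)
    (Us : Fin n → Matrix (Fin q) (Fin q) ℂ)
    (hU : ∀ j, Us j ∈ Matrix.unitaryGroup (Fin q) ℂ) :
    enumB q (kron q Us * M₁ * (kron q Us)ᴴ) (kron q Us * M₂ * (kron q Us)ᴴ) =
      enumB q M₁ M₂ :=
  stmt2_general q n M₁ M₂ Us hU
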